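/- Let a ∈ ℝ, λ > 1, c > 0, and let f : ℝ → ℝ be a bounded continuously differentiable function with f'(x) ≥ −c for all x and f'(x₀) = −c at some point x₀. Let T_* = T_*(a,λ,c), and let φ be the classical solution of the damped Burgers equation on ℝ × [0,T_*) determined by φ(x + f(x)·B(t), t) = f(x)/A(t). Then φ remains uniformly bounded: |φ(x,t)| ≤ (sup_{y∈ℝ} |f(y)|)·exp(|a|/(λ−1)) for all (x,t) ∈ ℝ × [0,T_*); whereas the spatial derivative blows up at the shock time: ∂_x φ(x₀ + f(x₀)·B(t), t) = −c/(A(t)·(1 − c·B(t))) → −∞ as t → T_*⁻. -/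

import Mathlib

/-!
Since `f` is bounded, the characteristic map `x ↦ x + f x · B(t)` is onto, and since `f' ≥ −c` and
`c B(t) < 1` for `t < T_*` it is strictly increasing; so `φ(·, t)` is `f / A(t)` composed with its
inverse. The uniform bound then comes from `A(t)⁻¹ ≤ exp(|a|/(λ−1))`, as `0 < (1+t)^(1−λ) ≤ 1`, and
the inverse function theorem gives `∂ₓφ = f'(x) / (A(t)(1 + f'(x) B(t)))` at `x + f x · B(t)`. As
`B' = A⁻¹ > 0` and `B(T_*) = 1/c`, the denominator at `x₀` tends to `0⁺` as `t → T_*⁻`.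
-/

/-- `A(t) = exp((a/(λ−1))·(1 − (1+t)^(1−λ)))`, i.e. `A(t) = exp(∫₀ᵗ a/(1+s)^λ ds)`. -/
noncomputable def dampA (a lam t : ℝ) : ℝ :=
  Real.exp (a / (lam - 1) * (1 - (1 + t) ^ (1 - lam)))

/-- `B(t) = ∫₀ᵗ A(s)⁻¹ ds = ∫₀ᵗ exp((a/(λ−1))·((1+s)^(1−λ) − 1)) ds`. -/
noncomputable def dampB (a lam t : ℝ) : ℝ :=
  ∫ s in (0:ℝ)..t, Real.exp (a / (lam - 1) * ((1 + s) ^ (1 - lam) - 1))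

open Filter Set Topology

section Damping

variable {a lam : ℝ}

lemma dampA_pos (t : ℝ) : 0 < dampA a lam t := Real.exp_pos _

lemma continuousAt_dampA {t : ℝ} (ht : -1 < t) : ContinuousAt (dampA a lam) t := by
  have h : (1 : ℝ) + t ≠ 0 := by linarith
  unfold dampA
  fun_prop (disch := exact Or.inl h)

lemma continuousOn_inv_dampA : ContinuousOn (fun t => (dampA a lam t)⁻¹) (Ioi (-1)) :=
  fun _ ht => ((continuousAt_dampA ht).inv₀ (dampA_pos _).ne').continuousWithinAt

lemma dampB_eq_integral_inv_dampA (t : ℝ) :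
    dampB a lam t = ∫ s in (0 : ℝ)..t, (dampA a lam s)⁻¹ := by
  unfold dampB dampA
  congr 1 with s
  rw [← Real.exp_neg]
  ring_nf

lemma hasDerivAt_dampB {t : ℝ} (ht : -1 < t) : HasDerivAt (dampB a lam) (dampA a lam t)⁻¹ t := by
  have hsub : uIcc 0 t ⊆ Ioi (-1) := fun s hs => (lt_min (by norm_num) ht).trans_le hs.1
  rw [funext dampB_eq_integral_inv_dampA]
  exact intervalIntegral.integral_hasDerivAt_right
    ((continuousOn_inv_dampA.mono hsub).intervalIntegrable)
    (continuousOn_inv_dampA.stronglyMeasurableAtFilter isOpen_Ioi t ht)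
    (continuousOn_inv_dampA.continuousAt (Ioi_mem_nhds ht))

lemma strictMonoOn_dampB : StrictMonoOn (dampB a lam) (Ioi (-1)) := by
  refine strictMonoOn_of_deriv_pos (convex_Ioi _)
    (fun t ht => (hasDerivAt_dampB ht).continuousAt.continuousWithinAt) fun t ht => ?_
  rw [interior_Ioi] at ht
  rw [(hasDerivAt_dampB ht).deriv]
  exact inv_pos.2 (dampA_pos t)

lemma dampB_nonneg {t : ℝ} (ht : 0 ≤ t) : 0 ≤ dampB a lam t := by
  rw [← show dampB a lam 0 = 0 from intervalIntegral.integral_same]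
  exact strictMonoOn_dampB.monotoneOn (mem_Ioi.2 (by norm_num)) (mem_Ioi.2 (by linarith)) ht

lemma mul_dampB_lt_one {c T t : ℝ} (hc : 0 < c) (hBT : dampB a lam T = 1 / c) (ht : 0 ≤ t)
    (htT : t < T) : c * dampB a lam t < 1 := by
  have hlt : dampB a lam t < dampB a lam T :=
    strictMonoOn_dampB (mem_Ioi.2 (by linarith)) (mem_Ioi.2 (by linarith)) htT
  rwa [hBT, lt_div_iff₀' hc] at hlt

lemma inv_dampA_le_exp (hlam : 1 < lam) {t : ℝ} (ht : 0 ≤ t) :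
    (dampA a lam t)⁻¹ ≤ Real.exp (|a| / (lam - 1)) := by
  have hpow_le : (1 + t) ^ (1 - lam) ≤ 1 :=
    Real.rpow_le_one_of_one_le_of_nonpos (by linarith) (by linarith)
  have hpow_pos : 0 < (1 + t) ^ (1 - lam) := Real.rpow_pos_of_pos (by linarith) _
  have hk : 0 ≤ |a| / (lam - 1) := div_nonneg (abs_nonneg a) (by linarith)
  rw [dampA, ← Real.exp_neg, Real.exp_le_exp]
  calc -(a / (lam - 1) * (1 - (1 + t) ^ (1 - lam)))
      ≤ |a| / (lam - 1) * (1 - (1 + t) ^ (1 - lam)) := by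
        rw [← neg_mul]
        refine mul_le_mul_of_nonneg_right ?_ (by linarith)
        rw [← neg_div]
        exact div_le_div_of_nonneg_right (neg_le_abs a) (by linarith)
    _ ≤ |a| / (lam - 1) := mul_le_of_le_one_right hk (by linarith)

end Damping

section Characteristics

variable {f u : ℝ → ℝ} {M : ℝ}

lemma surjective_add_mul_of_abs_le (hf : Continuous f) (hM : ∀ y, |f y| ≤ M) (b : ℝ) :
    Function.Surjective fun y => y + f y * b := by
  have hfb : ∀ y, |f y * b| ≤ M * |b| := fun y => by
    rw [abs_mul]; exact mul_le_mul_of_nonneg_right (hM y) (abs_nonneg b)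
  refine (continuous_id.add (hf.mul continuous_const)).surjective ?_ ?_
  · exact tendsto_atTop_add_right_of_le _ (-(M * |b|)) tendsto_id fun y => (abs_le.1 (hfb y)).1
  · exact tendsto_atBot_add_right_of_ge _ (M * |b|) tendsto_id fun y => (abs_le.1 (hfb y)).2

lemma hasDerivAt_of_forall_comp_eq {g h : ℝ → ℝ} (hg : StrictMono g)
    (hgs : Function.Surjective g) (hu : ∀ x, u (g x) = h x) {x g' h' : ℝ}
    (hg' : HasDerivAt g g' x) (hg'0 : g' ≠ 0) (hh' : HasDerivAt h h' x) :
    HasDerivAt u (h' / g') (g x) := by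
  set e := hg.orderIsoOfSurjective g hgs
  have hinv : HasDerivAt e.symm g'⁻¹ (g x) := by
    refine HasDerivAt.of_local_left_inverse e.symm.continuous.continuousAt ?_ hg'0
      (Eventually.of_forall fun y => hg.orderIsoOfSurjective_self_symm_apply g hgs y)
    rwa [hg.orderIsoOfSurjective_symm_apply_self g hgs]
  have hue : u = h ∘ e.symm := funext fun y => by
    rw [Function.comp_apply, ← hu, hg.orderIsoOfSurjective_self_symm_apply g hgs]
  rw [hue, div_eq_mul_inv]
  refine HasDerivAt.comp _ ?_ hinv
  rwa [hg.orderIsoOfSurjective_symm_apply_self g hgs]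

lemma hasDerivAt_of_characteristics (hf : Differentiable ℝ f) (hM : ∀ y, |f y| ≤ M) {b A : ℝ}
    (hpos : ∀ y, 0 < 1 + deriv f y * b) (hu : ∀ x, u (x + f x * b) = f x / A) (x : ℝ) :
    HasDerivAt u (deriv f x / (A * (1 + deriv f x * b))) (x + f x * b) := by
  have hchar : ∀ y, HasDerivAt (fun y => y + f y * b) (1 + deriv f y * b) y := fun y =>
    (hasDerivAt_id y).add ((hf y).hasDerivAt.mul_const b)
  have h := hasDerivAt_of_forall_comp_eq (strictMono_of_hasDerivAt_pos hchar hpos)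
    (surjective_add_mul_of_abs_le hf.continuous hM b) hu (hchar x) (hpos x).ne'
    ((hf x).hasDerivAt.div_const A)
  rwa [div_div] at h

lemma abs_le_of_characteristics (hf : Continuous f) (hM : ∀ y, |f y| ≤ M) {b A K : ℝ} (hA : 0 < A)
    (hAK : A⁻¹ ≤ K) (hu : ∀ x, u (x + f x * b) = f x / A) (x : ℝ) :
    |u x| ≤ (⨆ y, |f y|) * K := by
  obtain ⟨y, rfl⟩ := surjective_add_mul_of_abs_le hf hM b x
  have hsup : |f y| ≤ ⨆ y, |f y| := le_ciSup ⟨M, forall_mem_range.2 hM⟩ y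
  rw [hu, abs_div, abs_of_pos hA, div_eq_mul_inv]
  exact mul_le_mul hsup hAK (inv_nonneg.2 hA.le) ((abs_nonneg _).trans hsup)

end Characteristics

lemma tendsto_neg_div_dampA_mul_atBot {a lam c T : ℝ} (hc : 0 < c) (hT : 0 < T)
    (hBT : dampB a lam T = 1 / c) :
    Tendsto (fun t => -c / (dampA a lam t * (1 - c * dampB a lam t))) (𝓝[<] T) atBot := by
  have hT1 : (-1 : ℝ) < T := by linarith
  have hden : Tendsto (fun t => dampA a lam t * (1 - c * dampB a lam t)) (𝓝[<] T) (𝓝[>] 0) := by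
    refine tendsto_nhdsWithin_of_tendsto_nhds_of_eventually_within _ ?_ ?_
    · have hzero : dampA a lam T * (1 - c * dampB a lam T) = 0 := by
        rw [hBT, mul_one_div_cancel hc.ne', sub_self, mul_zero]
      have hcont : ContinuousAt (fun t => dampA a lam t * (1 - c * dampB a lam t)) T :=
        (continuousAt_dampA hT1).mul
          (continuousAt_const.sub (continuousAt_const.mul (hasDerivAt_dampB hT1).continuousAt))
      simpa only [hzero] using hcont.tendsto.mono_left nhdsWithin_le_nhds
    · filter_upwards [Ioo_mem_nhdsLT hT] with t ht
      exact mul_pos (dampA_pos t) (sub_pos.2 (mul_dampB_lt_one hc hBT ht.1.le ht.2))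
  simpa only [div_eq_mul_inv, Function.comp_def] using
    (tendsto_inv_nhdsGT_zero.comp hden).const_mul_atTop_of_neg (neg_lt_zero.2 hc)

/-- At shock formation for the damped Burgers equation, the solution itself stays uniformly
bounded by `(sup |f|)·exp(|a|/(λ−1))`, while the spatial derivative along the critical
characteristic equals `−c/(A(t)·(1 − c·B(t)))` and blows up to `−∞` as `t → T_*⁻`. -/
theorem stmt12 (a lam c Tstar : ℝ) (hlam : 1 < lam) (hc : 0 < c)
    (hTs : 0 < Tstar) (hBTs : dampB a lam Tstar = 1 / c)
    (f : ℝ → ℝ) (hf : ContDiff ℝ 1 f) (hfb : ∃ M : ℝ, ∀ y : ℝ, |f y| ≤ M)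
    (hf' : ∀ x : ℝ, -c ≤ deriv f x) (x₀ : ℝ) (hx₀ : deriv f x₀ = -c)
    (φ : ℝ → ℝ → ℝ)
    (hφ : ∀ x : ℝ, ∀ t ∈ Set.Ico (0 : ℝ) Tstar,
      φ (x + f x * dampB a lam t) t = f x / dampA a lam t) :
    (∀ x : ℝ, ∀ t ∈ Set.Ico (0 : ℝ) Tstar,
      |φ x t| ≤ (⨆ y : ℝ, |f y|) * Real.exp (|a| / (lam - 1))) ∧
    (∀ t ∈ Set.Ico (0 : ℝ) Tstar,
      deriv (fun y => φ y t) (x₀ + f x₀ * dampB a lam t) =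
        -c / (dampA a lam t * (1 - c * dampB a lam t))) ∧
    Filter.Tendsto (fun t => deriv (fun y => φ y t) (x₀ + f x₀ * dampB a lam t))
      (nhdsWithin Tstar (Set.Iio Tstar)) Filter.atBot := by
  obtain ⟨M, hM⟩ := hfb
  have hfd : Differentiable ℝ f := hf.differentiable one_ne_zero
  have hderiv : ∀ t ∈ Ico 0 Tstar, deriv (fun y => φ y t) (x₀ + f x₀ * dampB a lam t) =
      -c / (dampA a lam t * (1 - c * dampB a lam t)) := by
    rintro t ⟨ht0, htT⟩
    have hB0 := dampB_nonneg (a := a) (lam := lam) ht0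
    have hcB := mul_dampB_lt_one hc hBTs ht0 htT
    have hpos : ∀ y, 0 < 1 + deriv f y * dampB a lam t := fun y => by
      nlinarith [mul_le_mul_of_nonneg_right (hf' y) hB0]
    rw [(hasDerivAt_of_characteristics hfd hM hpos (fun x => hφ x t ⟨ht0, htT⟩) x₀).deriv, hx₀,
      neg_mul, ← sub_eq_add_neg]
  refine ⟨fun x t ⟨ht0, htT⟩ => ?_, hderiv, ?_⟩
  · exact abs_le_of_characteristics (u := fun y => φ y t) hf.continuous hM (dampA_pos t)
      (inv_dampA_le_exp hlam ht0) (fun y => hφ y t ⟨ht0, htT⟩) x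
  · refine (tendsto_neg_div_dampA_mul_atBot hc hTs hBTs).congr' ?_
    filter_upwards [Ioo_mem_nhdsLT hTs] with t ht
    exact (hderiv t ⟨ht.1.le, ht.2⟩).symm
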